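/- Let n ≥ 1 and let a₁, …, aₙ be arbitrary real numbers. Then there exists a Lie algebra automorphism φ of the elementary filiform Lie algebra f_{n+2} with φ(e₁) = e₁ and φ(e_{n+2}) = e_{n+2} that maps the abelian subalgebra spanned by {e₂ + a₁e_{n+2}, e₃ + a₂e_{n+2}, …, e_{n+1} + aₙe_{n+2}} onto the subalgebra spanned by {e₂, e₃, …, e_{n+1}}. -/
import Mathlib

namespace Stmt4Aux

lemma prod_sub_range (k : ℕ) : ∏ i ∈ Finset.range k, (k - i) = k.factorial := by
  induction k with
  | zero => simp
  | succ k ih =>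
    rw [Finset.prod_range_succ']
    simp only [Nat.succ_sub_succ, Nat.sub_zero, ih, Nat.factorial_succ]
    ring

def ee {n : ℕ} {L : Type} [AddCommGroup L] (e : Fin (n + 2) → L) (j : ℕ) : L :=
  if h : j < n + 2 then e ⟨j, h⟩ else 0

def mm (n j k : ℕ) : ℝ := ∏ i ∈ Finset.range k, ((n + 1 - j - i : ℕ) : ℝ)

noncomputable def cc {n : ℕ} (a : Fin n → ℝ) (k : ℕ) : ℝ :=
  if h : 1 ≤ k ∧ k ≤ n then -(a ⟨n - k, by omega⟩) / (k.factorial : ℝ) else 0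

noncomputable def ww {n : ℕ} {L : Type} [AddCommGroup L] [Module ℝ L]
    (e : Fin (n + 2) → L) (a : Fin n → ℝ) (j : ℕ) : L :=
  ∑ k ∈ (Finset.range n).filter (fun k => j + k + 1 ≤ n),
    (cc a (k + 1) * mm n j (k + 1)) • ee e (j + k + 1)

lemma mm_eq_factorial {n j k : ℕ} (h : j + k = n + 1) :
    mm n j k = (k.factorial : ℝ) := by
  unfold mm
  rw [← prod_sub_range k, Nat.cast_prod]
  refine Finset.prod_congr rfl fun i _ => ?_
  congr 1
  omega

end Stmt4Aux

/-- For `n ≥ 1`, let `L` be the elementary filiform Lie algebra `f_{n+2}` over `ℝ`,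
given by a basis `e 0, e 1, …, e (n+1)` (corresponding to `e₁, …, e_{n+2}`), and
let `a₁, …, aₙ` be real numbers.  Then there is a Lie algebra automorphism `φ`
of `L` fixing `e₁` and `e_{n+2}` which maps the subalgebra spanned by
`{e₂ + a₁ e_{n+2}, …, e_{n+1} + aₙ e_{n+2}}` onto the subalgebra spanned by
`{e₂, …, e_{n+1}}`. -/
theorem stmt4
    (n : ℕ) (hn : 1 ≤ n)
    (L : Type) [LieRing L] [LieAlgebra ℝ L]
    (e : Fin (n + 2) → L)
    (hindep : LinearIndependent ℝ e)
    (hspan : Submodule.span ℝ (Set.range e) = ⊤)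
    (hbr : ∀ j : Fin (n + 2), ∀ _h1 : 1 ≤ (j : ℕ), ∀ _h2 : (j : ℕ) ≤ n,
      ⁅e 0, e j⁆ = ((n + 1 - (j : ℕ) : ℕ) : ℝ) • e ⟨(j : ℕ) + 1, by omega⟩)
    (hlast : ⁅e 0, e ⟨n + 1, by omega⟩⁆ = 0)
    (hzero : ∀ i j : Fin (n + 2), (i : ℕ) ≠ 0 → (j : ℕ) ≠ 0 → ⁅e i, e j⁆ = 0)
    (a : Fin n → ℝ) :
    ∃ φ : L ≃ₗ⁅ℝ⁆ L,
      φ (e 0) = e 0 ∧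
      φ (e ⟨n + 1, by omega⟩) = e ⟨n + 1, by omega⟩ ∧
      Submodule.map (φ.toLinearEquiv : L →ₗ[ℝ] L)
          (Submodule.span ℝ (Set.range fun i : Fin n =>
            e ⟨(i : ℕ) + 1, by omega⟩ + a i • e ⟨n + 1, by omega⟩)) =
        Submodule.span ℝ (Set.range fun i : Fin n => e ⟨(i : ℕ) + 1, by omega⟩) := by
  classical
  open Stmt4Aux in
  -- basic abbreviations
  set D : Module.End ℝ L := LieAlgebra.ad ℝ L (e 0) with hDdef
  have hDapp : ∀ x : L, D x = ⁅e 0, x⁆ := fun x => rfl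
  have hmem : ∀ x : L, x ∈ Submodule.span ℝ (Set.range e) := by
    intro x; rw [hspan]; trivial
  have heE : ∀ (j : ℕ) (h : j < n + 2), Stmt4Aux.ee e j = e ⟨j, h⟩ := fun j h => dif_pos h
  have heE0 : ∀ (j : ℕ), n + 2 ≤ j → Stmt4Aux.ee e j = 0 := fun j h =>
    dif_neg (by omega)
  -- action of D on the basis (ℕ-indexed)
  have hD : ∀ j : ℕ, 1 ≤ j →
      D (Stmt4Aux.ee e j) = ((n + 1 - j : ℕ) : ℝ) • Stmt4Aux.ee e (j + 1) := by
    intro j hj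
    rcases lt_trichotomy j (n + 1) with h | h | h
    · have hj2 : j < n + 2 := by omega
      have hj3 : j + 1 < n + 2 := by omega
      rw [heE j hj2, heE (j + 1) hj3, hDapp]
      exact hbr ⟨j, hj2⟩ hj (show j ≤ n by omega)
    · subst h
      rw [heE (n + 1) (by omega), hDapp, hlast]
      rw [show n + 1 - (n + 1) = 0 from by omega]
      simp
    · rw [heE0 j (by omega), heE0 (j + 1) (by omega)]
      simp
  have hD0 : D (e 0) = 0 := by rw [hDapp, lie_self]
  have hDlast : D (Stmt4Aux.ee e (n + 1)) = 0 := by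
    rw [heE (n + 1) (by omega), hDapp, hlast]
  -- powers of D on the basis
  have hpow : ∀ (k j : ℕ), 1 ≤ j →
      (D ^ k) (Stmt4Aux.ee e j) = Stmt4Aux.mm n j k • Stmt4Aux.ee e (j + k) := by
    intro k
    induction k with
    | zero => intro j hj; simp [Stmt4Aux.mm]
    | succ k ih =>
      intro j hj
      rw [pow_succ, Module.End.mul_apply, hD j hj, map_smul, ih (j + 1) (by omega),
        smul_smul, show j + 1 + k = j + (k + 1) from by omega]
      congr 1
      unfold Stmt4Aux.mm
      rw [Finset.prod_range_succ', mul_comm, Nat.sub_zero]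
      congr 1
      refine Finset.prod_congr rfl fun i _ => ?_
      congr 1
      omega
  -- the nilpotent part
  set Nm : Module.End ℝ L :=
    ∑ k ∈ Finset.range n, Stmt4Aux.cc a (k + 1) • D ^ (k + 1) with hNm
  have hNapp : ∀ x : L,
      Nm x = ∑ k ∈ Finset.range n, Stmt4Aux.cc a (k + 1) • (D ^ (k + 1)) x := by
    intro x
    rw [hNm]
    simp [LinearMap.sum_apply]
  have hNe0 : Nm (e 0) = 0 := by
    rw [hNapp]
    refine Finset.sum_eq_zero fun k _ => ?_
    rw [pow_succ, Module.End.mul_apply, hD0, map_zero, smul_zero]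
  have hNlast : Nm (Stmt4Aux.ee e (n + 1)) = 0 := by
    rw [hNapp]
    refine Finset.sum_eq_zero fun k _ => ?_
    rw [pow_succ, Module.End.mul_apply, hDlast, map_zero, smul_zero]
  have hcomm : Commute D Nm := by
    rw [hNm]
    exact Commute.sum_right _ _ _ fun k _ =>
      ((Commute.refl D).pow_right (k + 1)).smul_right _
  -- nilpotency
  have hDtop : D ^ (n + 1) = 0 := by
    apply LinearMap.ext
    intro x
    simp only [LinearMap.zero_apply]
    induction hmem x using Submodule.span_induction with
    | mem z hz =>
      obtain ⟨i, rfl⟩ := hz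
      by_cases hi : (i : ℕ) = 0
      · have hie : e i = e 0 := by
          congr 1
          exact Fin.ext hi
        rw [hie, pow_succ, Module.End.mul_apply, hD0, map_zero]
      · have h1 : 1 ≤ (i : ℕ) := Nat.one_le_iff_ne_zero.mpr hi
        have hee : e i = Stmt4Aux.ee e (i : ℕ) := by
          rw [heE (i : ℕ) i.isLt]
        rw [hee, hpow (n + 1) (i : ℕ) h1, heE0 _ (by omega), smul_zero]
    | zero => simp
    | add u v _ _ ihu ihv => rw [map_add, ihu, ihv, add_zero]
    | smul r u _ ih => rw [map_smul, ih, smul_zero]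
  have hnil : Nm ^ (n + 1) = 0 := by
    set Q : Module.End ℝ L :=
      ∑ k ∈ Finset.range n, Stmt4Aux.cc a (k + 1) • D ^ k with hQ
    have hNQ : Nm = D * Q := by
      rw [hNm, hQ, Finset.mul_sum]
      refine Finset.sum_congr rfl fun k _ => ?_
      rw [mul_smul_comm, ← pow_succ']
    have hcommQ : Commute D Q :=
      Commute.sum_right _ _ _ fun k _ => ((Commute.refl D).pow_right k).smul_right _
    rw [hNQ, hcommQ.mul_pow, hDtop, zero_mul]
  -- the linear automorphism
  have hunit : IsUnit (1 + Nm) := IsNilpotent.isUnit_one_add ⟨n + 1, hnil⟩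
  have hbij : Function.Bijective (1 + Nm : Module.End ℝ L) :=
    (Module.End.isUnit_iff _).mp hunit
  set f : L ≃ₗ[ℝ] L := LinearEquiv.ofBijective (1 + Nm : Module.End ℝ L) hbij with hf
  have hfapp : ∀ x : L, f x = x + Nm x := by
    intro x
    rw [hf]
    simp [LinearEquiv.ofBijective_apply, LinearMap.add_apply]
  have hfe0 : f (e 0) = e 0 := by rw [hfapp, hNe0, add_zero]
  have hflast : f (Stmt4Aux.ee e (n + 1)) = Stmt4Aux.ee e (n + 1) := by
    rw [hfapp, hNlast, add_zero]
  -- the abelian part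
  set NS : Submodule ℝ L := Submodule.span ℝ (e '' {i : Fin (n + 2) | (i : ℕ) ≠ 0})
    with hNS
  have heNS : ∀ i : Fin (n + 2), (i : ℕ) ≠ 0 → e i ∈ NS := fun i hi =>
    Submodule.subset_span ⟨i, hi, rfl⟩
  have hDNS : ∀ x : L, D x ∈ NS := by
    intro x
    induction hmem x using Submodule.span_induction with
    | mem z hz =>
      obtain ⟨i, rfl⟩ := hz
      by_cases hi : (i : ℕ) = 0
      · have hie : e i = e 0 := by congr 1; exact Fin.ext hi
        rw [hie, hD0]; exact zero_mem _
      · have h1 : 1 ≤ (i : ℕ) := Nat.one_le_iff_ne_zero.mpr hi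
        have hee : e i = Stmt4Aux.ee e (i : ℕ) := by rw [heE (i : ℕ) i.isLt]
        rw [hee, hD (i : ℕ) h1]
        rcases lt_or_ge ((i : ℕ) + 1) (n + 2) with h | h
        · rw [heE _ h]
          exact Submodule.smul_mem _ _ (heNS ⟨(i : ℕ) + 1, h⟩ (by simp))
        · rw [heE0 _ h, smul_zero]; exact zero_mem _
    | zero => rw [map_zero]; exact zero_mem _
    | add u v _ _ ihu ihv => rw [map_add]; exact add_mem ihu ihv
    | smul r u _ ih => rw [map_smul]; exact Submodule.smul_mem _ _ ih
  have hNmNS : ∀ x : L, Nm x ∈ NS := by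
    intro x
    rw [hNapp]
    refine Submodule.sum_mem _ fun k _ => Submodule.smul_mem _ _ ?_
    rw [pow_succ', Module.End.mul_apply]
    exact hDNS _
  have habel : ∀ u, u ∈ NS → ∀ v, v ∈ NS → ⁅u, v⁆ = 0 := by
    intro u hu
    induction hu using Submodule.span_induction with
    | mem z hz =>
      intro v hv
      induction hv using Submodule.span_induction with
      | mem w hw =>
        obtain ⟨i, hi, rfl⟩ := hz
        obtain ⟨j, hj, rfl⟩ := hw
        exact hzero i j hi hj
      | zero => exact lie_zero _
      | add p q _ _ ihp ihq => rw [lie_add, ihp, ihq, add_zero]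
      | smul r p _ ih => rw [lie_smul, ih, smul_zero]
    | zero => intro v _; exact zero_lie _
    | add p q _ _ ihp ihq => intro v hv; rw [add_lie, ihp v hv, ihq v hv, add_zero]
    | smul r p _ ih => intro v hv; rw [smul_lie, ih v hv, smul_zero]
  have hfNS : ∀ i : Fin (n + 2), (i : ℕ) ≠ 0 → f (e i) ∈ NS := by
    intro i hi
    rw [hfapp]
    exact add_mem (heNS i hi) (hNmNS _)
  -- f commutes with D
  have hfD : ∀ x : L, f (D x) = D (f x) := by
    intro x
    have h3 : D (Nm x) = Nm (D x) := LinearMap.congr_fun hcomm.eq x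
    rw [hfapp, hfapp, map_add, h3]
  -- f is a Lie algebra morphism
  have hkey0 : ∀ y : L, f ⁅e 0, y⁆ = ⁅f (e 0), f y⁆ := by
    intro y
    rw [hfe0, ← hDapp, ← hDapp, hfD]
  have hkey : ∀ x y : L, f ⁅x, y⁆ = ⁅f x, f y⁆ := by
    intro x y
    induction hmem x using Submodule.span_induction with
    | mem z hz =>
      obtain ⟨i, rfl⟩ := hz
      by_cases hi : (i : ℕ) = 0
      · have hie : e i = e 0 := by congr 1; exact Fin.ext hi
        rw [hie]
        exact hkey0 y
      · induction hmem y using Submodule.span_induction with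
        | mem w hw =>
          obtain ⟨j, rfl⟩ := hw
          by_cases hj : (j : ℕ) = 0
          · have hje : e j = e 0 := by congr 1; exact Fin.ext hj
            rw [hje, ← lie_skew (e i) (e 0), map_neg, hkey0 (e i)]
            exact lie_skew _ _
          · rw [hzero i j hi hj, map_zero]
            exact (habel _ (hfNS i hi) _ (hfNS j hj)).symm
        | zero => simp
        | add p q _ _ ihp ihq => rw [lie_add, map_add, map_add, lie_add, ihp, ihq]
        | smul r p _ ih => rw [lie_smul, map_smul, map_smul, lie_smul, ih]
    | zero => simp
    | add p q _ _ ihp ihq => rw [add_lie, map_add, map_add, add_lie, ihp, ihq]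
    | smul r p _ ih => rw [smul_lie, map_smul, map_smul, smul_lie, ih]
  -- the Lie algebra automorphism
  refine ⟨{ toLinearMap := f.toLinearMap, map_lie' := fun {x y} => hkey x y,
            invFun := f.symm, left_inv := f.left_inv, right_inv := f.right_inv },
          hfe0, ?_, ?_⟩
  · show f (e ⟨n + 1, by omega⟩) = e ⟨n + 1, by omega⟩
    rw [← heE (n + 1) (by omega)]
    exact hflast
  -- the span condition
  · show Submodule.map (f : L →ₗ[ℝ] L)
        (Submodule.span ℝ (Set.range fun i : Fin n =>
          e ⟨(i : ℕ) + 1, by omega⟩ + a i • e ⟨n + 1, by omega⟩)) =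
      Submodule.span ℝ (Set.range fun i : Fin n => e ⟨(i : ℕ) + 1, by omega⟩)
    -- description of Nm on the middle basis vectors
    have hNj : ∀ j : ℕ, ∀ hj1 : 1 ≤ j, ∀ hjn : j ≤ n,
        Nm (Stmt4Aux.ee e j)
          = Stmt4Aux.ww e a j + (-(a ⟨j - 1, by omega⟩)) • Stmt4Aux.ee e (n + 1) := by
      intro j hj1 hjn
      have hterm : ∀ k : ℕ, Stmt4Aux.cc a (k + 1) • (D ^ (k + 1)) (Stmt4Aux.ee e j)
          = (Stmt4Aux.cc a (k + 1) * Stmt4Aux.mm n j (k + 1)) • Stmt4Aux.ee e (j + k + 1) := by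
        intro k
        rw [hpow (k + 1) j hj1, smul_smul, show j + (k + 1) = j + k + 1 from by omega]
      rw [hNapp, Finset.sum_congr rfl fun k _ => hterm k,
        ← Finset.sum_filter_add_sum_filter_not (Finset.range n) (fun k => j + k + 1 ≤ n)]
      unfold Stmt4Aux.ww
      congr 1
      have hccval : Stmt4Aux.cc a (n - j + 1) * Stmt4Aux.mm n j (n - j + 1)
          = -(a ⟨j - 1, by omega⟩) := by
        unfold Stmt4Aux.cc
        rw [dif_pos (show 1 ≤ n - j + 1 ∧ n - j + 1 ≤ n from ⟨by omega, by omega⟩),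
          Stmt4Aux.mm_eq_factorial (show j + (n - j + 1) = n + 1 by omega),
          div_mul_cancel₀ _ (Nat.cast_ne_zero.mpr (Nat.factorial_ne_zero _))]
        exact congrArg (fun z => -(a z)) (Fin.ext (show n - (n - j + 1) = j - 1 by omega))
      rw [Finset.sum_eq_single_of_mem (n - j)
          (Finset.mem_filter.mpr ⟨Finset.mem_range.mpr (by omega), by omega⟩)
          (fun k hk hne => by
            have hk1 := Finset.mem_range.mp (Finset.mem_filter.mp hk).1
            have hk2 := (Finset.mem_filter.mp hk).2
            rw [heE0 (j + k + 1) (by omega), smul_zero]),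
        show j + (n - j) + 1 = n + 1 from by omega]
      rw [hccval]
    -- the image of the generators
    have hGen : ∀ j : ℕ, ∀ hj1 : 1 ≤ j, ∀ hjn : j ≤ n,
        f (e ⟨j, by omega⟩ + a ⟨j - 1, by omega⟩ • e ⟨n + 1, by omega⟩)
          = Stmt4Aux.ee e j + Stmt4Aux.ww e a j := by
      intro j hj1 hjn
      rw [← heE j (by omega), ← heE (n + 1) (by omega), map_add, map_smul, hfapp, hfapp,
        hNlast, add_zero, hNj j hj1 hjn, neg_smul]
      abel
    apply le_antisymm
    · rw [Submodule.map_span]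
      refine Submodule.span_le.mpr ?_
      rintro x ⟨y, ⟨i, rfl⟩, rfl⟩
      simp only [LinearEquiv.coe_coe]
      have hG := hGen ((i : ℕ) + 1) (by omega) (by omega)
      rw [show (⟨(i : ℕ) + 1 - 1, by omega⟩ : Fin n) = i from Fin.ext rfl] at hG
      rw [hG]
      refine Submodule.add_mem _
        (Submodule.subset_span ⟨i, (heE _ (by omega)).symm⟩) ?_
      unfold Stmt4Aux.ww
      refine Submodule.sum_mem _ fun k hk => Submodule.smul_mem _ _ ?_
      have hk2 := (Finset.mem_filter.mp hk).2
      refine Submodule.subset_span ⟨⟨(i : ℕ) + k + 1, by omega⟩, ?_⟩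
      rw [heE ((i : ℕ) + 1 + k + 1) (by omega)]
      exact congrArg e (Fin.ext (show (i : ℕ) + k + 1 + 1 = (i : ℕ) + 1 + k + 1 by omega))
    · refine Submodule.span_le.mpr ?_
      rintro x ⟨i, rfl⟩
      have hrec : ∀ d : ℕ, ∀ j : ℕ, 1 ≤ j → j ≤ n → n - j < d →
          Stmt4Aux.ee e j ∈ Submodule.map (f : L →ₗ[ℝ] L)
            (Submodule.span ℝ (Set.range fun i : Fin n =>
              e ⟨(i : ℕ) + 1, by omega⟩ + a i • e ⟨n + 1, by omega⟩)) := by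
        intro d
        induction d with
        | zero => intro j _ _ h; omega
        | succ d ih =>
          intro j hj1 hjn hd
          have hjlt : j - 1 < n := by omega
          have hxmem : (e ⟨j, by omega⟩ + a ⟨j - 1, hjlt⟩ • e ⟨n + 1, by omega⟩)
              ∈ Submodule.span ℝ (Set.range fun i : Fin n =>
                e ⟨(i : ℕ) + 1, by omega⟩ + a i • e ⟨n + 1, by omega⟩) := by
            refine Submodule.subset_span ⟨⟨j - 1, hjlt⟩, ?_⟩
            exact congrArg₂ (· + ·)
              (congrArg e (Fin.ext (show j - 1 + 1 = j by omega))) rfl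
          have h1 := Submodule.mem_map_of_mem (f := (f : L →ₗ[ℝ] L)) hxmem
          simp only [LinearEquiv.coe_coe] at h1
          rw [hGen j hj1 hjn] at h1
          have hww : Stmt4Aux.ww e a j ∈ Submodule.map (f : L →ₗ[ℝ] L)
              (Submodule.span ℝ (Set.range fun i : Fin n =>
                e ⟨(i : ℕ) + 1, by omega⟩ + a i • e ⟨n + 1, by omega⟩)) := by
            unfold Stmt4Aux.ww
            refine Submodule.sum_mem _ fun k hk => Submodule.smul_mem _ _ ?_
            have hk2 := (Finset.mem_filter.mp hk).2
            exact ih (j + k + 1) (by omega) (by omega) (by omega)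
          have h3 := Submodule.sub_mem _ h1 hww
          simpa using h3
      have hfin := hrec (n + 1) ((i : ℕ) + 1) (by omega) (by omega) (by omega)
      rw [heE ((i : ℕ) + 1) (by omega)] at hfin
      exact hfin
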